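/- Let φ(t) = t + log t² and let t₀ ≤ −4. Then for every τ > 0 and all t, y, s ≤ t₀: (i) if y ≥ t then e^{−τ(φ(t) − φ(y))} ≤ e^{τφ'(t)(y−t) − τ(y−t)²/t²}; (ii) if s ≤ y ≤ t then e^{−τ(φ(t) − φ(y))} ≤ e^{−τφ'(t)(t−y) − τ(y−t)²/s²}. Here φ'(t) = 1 + 2/t. -/

import Mathlib

/-!
For `t, y < 0` put `u = y / t > 0`. Then `φ(y) - φ(t) - φ'(t) (y - t) = 2 (log u - (u - 1))`, so both
estimates reduce to sharpened forms of `log u ≤ u - 1`: `log u ≤ (u - 1) - (u - 1)² / 2` for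
`u ≤ 1` (case `t ≤ y`) and `log u ≤ (u - 1) - (1 - u⁻¹)² / 2` for `u ≥ 1` (case `y ≤ t`). Each follows
because the difference of the two sides is monotone on `(0, ∞)` and vanishes at `u = 1`. In the
second case, `s ≤ y < 0` gives `y² ≤ s²`, which weakens `(y - t)² / y²` to `(y - t)² / s²`.
-/

open Real

noncomputable section

/-- The weight function `φ(t) = t + log t²` in the logarithmic variable `t = log r`. -/
noncomputable def phiLog (t : ℝ) : ℝ := t + Real.log (t ^ 2)

/-- The derivative `φ'(t) = 1 + 2/t` of the weight function. -/
noncomputable def phiLog' (t : ℝ) : ℝ := 1 + 2 / t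

namespace Real

theorem log_le_sub_one_sub_sq_div_two {u : ℝ} (hu : 0 < u) (hu1 : u ≤ 1) :
    log u ≤ (u - 1) - (u - 1) ^ 2 / 2 := by
  let f : ℝ → ℝ := fun x => (x - 1) - (x - 1) ^ 2 / 2 - log x
  have hf : ∀ x, 0 < x → HasDerivAt f (-((x - 1) ^ 2 / x)) x := fun x hx => by
    have h := ((((hasDerivAt_id x).sub_const 1).pow 2).div_const 2)
    refine ((((hasDerivAt_id x).sub_const 1).sub h).sub (hasDerivAt_log hx.ne')).congr_deriv ?_
    simp only [id]
    field_simp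
    ring
  have hanti : AntitoneOn f (Set.Ioi 0) := by
    refine antitoneOn_of_hasDerivWithinAt_nonpos (f' := fun x => -((x - 1) ^ 2 / x)) (convex_Ioi 0)
      (fun x hx => (hf x hx).continuousAt.continuousWithinAt) (fun x hx => ?_) (fun x hx => ?_)
    · rw [interior_Ioi] at hx ⊢
      exact (hf x hx).hasDerivWithinAt
    · rw [interior_Ioi] at hx
      have : 0 ≤ (x - 1) ^ 2 / x := div_nonneg (sq_nonneg _) (Set.mem_Ioi.mp hx).le
      linarith
  have h := hanti hu (Set.mem_Ioi.mpr one_pos) hu1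
  simp only [f, sub_self, log_one] at h
  linarith

theorem log_le_sub_one_sub_sq_one_sub_inv_div_two {u : ℝ} (hu1 : 1 ≤ u) :
    log u ≤ (u - 1) - (1 - u⁻¹) ^ 2 / 2 := by
  let g : ℝ → ℝ := fun x => (x - 1) - (1 - x⁻¹) ^ 2 / 2 - log x
  have hg : ∀ x, 0 < x → HasDerivAt g ((1 - x⁻¹) ^ 2 * (1 + x⁻¹)) x := fun x hx => by
    have h := (((hasDerivAt_inv hx.ne').const_sub 1).pow 2).div_const 2
    refine ((((hasDerivAt_id x).sub_const 1).sub h).sub (hasDerivAt_log hx.ne')).congr_deriv ?_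
    have := hx.ne'
    norm_num
    field_simp
    ring
  have hmono : MonotoneOn g (Set.Ioi 0) := by
    refine monotoneOn_of_hasDerivWithinAt_nonneg (f' := fun x => (1 - x⁻¹) ^ 2 * (1 + x⁻¹))
      (convex_Ioi 0)
      (fun x hx => (hg x hx).continuousAt.continuousWithinAt) (fun x hx => ?_) (fun x hx => ?_)
    · rw [interior_Ioi] at hx ⊢
      exact (hg x hx).hasDerivWithinAt
    · rw [interior_Ioi] at hx
      exact mul_nonneg (sq_nonneg _) (by linarith [inv_pos.mpr (Set.mem_Ioi.mp hx)])
  have h := hmono (Set.mem_Ioi.mpr one_pos) (zero_lt_one.trans_le hu1) hu1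
  simp only [g, sub_self, inv_one, log_one] at h
  linarith

end Real

theorem phiLog_sub_phiLog_sub_phiLog'_mul {t y : ℝ} (ht : t ≠ 0) (hy : y ≠ 0) :
    phiLog y - phiLog t - phiLog' t * (y - t) = 2 * (log (y / t) - (y / t - 1)) := by
  rw [log_div hy ht]
  simp only [phiLog, phiLog', log_pow]
  field_simp
  ring

theorem phiLog_sub_le_of_le {t y : ℝ} (hty : t ≤ y) (hy : y < 0) :
    phiLog y - phiLog t ≤ phiLog' t * (y - t) - (y - t) ^ 2 / t ^ 2 := by
  have ht : t < 0 := hty.trans_lt hy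
  have hlog := log_le_sub_one_sub_sq_div_two (div_pos_of_neg_of_neg hy ht)
    ((div_le_one_of_neg ht).mpr hty)
  have hsq : (y / t - 1) ^ 2 = (y - t) ^ 2 / t ^ 2 := by
    rw [div_sub_one ht.ne, div_pow]
  linarith [phiLog_sub_phiLog_sub_phiLog'_mul ht.ne hy.ne]

theorem phiLog_sub_le_of_ge {t y : ℝ} (hyt : y ≤ t) (ht : t < 0) :
    phiLog y - phiLog t ≤ phiLog' t * (y - t) - (y - t) ^ 2 / y ^ 2 := by
  have hy : y < 0 := hyt.trans_lt ht
  have hlog := log_le_sub_one_sub_sq_one_sub_inv_div_two ((one_le_div_of_neg ht).mpr hyt)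
  have hsq : (1 - (y / t)⁻¹) ^ 2 = (y - t) ^ 2 / y ^ 2 := by
    rw [inv_div, one_sub_div hy.ne, div_pow]
  linarith [phiLog_sub_phiLog_sub_phiLog'_mul ht.ne hy.ne]

theorem statement18_general (t₀ : ℝ) (ht₀ : t₀ ≤ -4) (τ : ℝ) (hτ : 0 < τ)
    (t y s : ℝ) (ht : t ≤ t₀) (hy : y ≤ t₀) :
    (t ≤ y → Real.exp (-(τ * (phiLog t - phiLog y)))
        ≤ Real.exp (τ * phiLog' t * (y - t) - τ * (y - t) ^ 2 / t ^ 2))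
    ∧ (s ≤ y → y ≤ t → Real.exp (-(τ * (phiLog t - phiLog y)))
        ≤ Real.exp (-(τ * phiLog' t * (t - y)) - τ * (y - t) ^ 2 / s ^ 2)) := by
  have ht0 : t < 0 := by linarith
  have hy0 : y < 0 := by linarith
  refine ⟨fun hty => ?_, fun hsy hyt => ?_⟩
  · rw [exp_le_exp]
    calc -(τ * (phiLog t - phiLog y)) = τ * (phiLog y - phiLog t) := by ring
      _ ≤ τ * (phiLog' t * (y - t) - (y - t) ^ 2 / t ^ 2) :=
        mul_le_mul_of_nonneg_left (phiLog_sub_le_of_le hty hy0) hτ.le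
      _ = τ * phiLog' t * (y - t) - τ * (y - t) ^ 2 / t ^ 2 := by ring
  · have hys : (y - t) ^ 2 / s ^ 2 ≤ (y - t) ^ 2 / y ^ 2 :=
      div_le_div_of_nonneg_left (sq_nonneg _) (sq_pos_of_neg hy0) (by nlinarith)
    rw [exp_le_exp]
    calc -(τ * (phiLog t - phiLog y)) = τ * (phiLog y - phiLog t) := by ring
      _ ≤ τ * (phiLog' t * (y - t) - (y - t) ^ 2 / y ^ 2) :=
        mul_le_mul_of_nonneg_left (phiLog_sub_le_of_ge hyt ht0) hτ.le
      _ ≤ τ * (phiLog' t * (y - t) - (y - t) ^ 2 / s ^ 2) := by gcongr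
      _ = -(τ * phiLog' t * (t - y)) - τ * (y - t) ^ 2 / s ^ 2 := by ring

/-- for `t, y, s ≤ t₀ ≤ -4` and `τ > 0`:
(i) if `y ≥ t` then `e^{-τ(φ(t) - φ(y))} ≤ e^{τφ'(t)(y-t) - τ(y-t)²/t²}`;
(ii) if `s ≤ y ≤ t` then `e^{-τ(φ(t) - φ(y))} ≤ e^{-τφ'(t)(t-y) - τ(y-t)²/s²}`. -/
theorem statement18 (t₀ : ℝ) (ht₀ : t₀ ≤ -4) (τ : ℝ) (hτ : 0 < τ)
    (t y s : ℝ) (ht : t ≤ t₀) (hy : y ≤ t₀) (hs : s ≤ t₀) :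
    (t ≤ y → Real.exp (-(τ * (phiLog t - phiLog y)))
        ≤ Real.exp (τ * phiLog' t * (y - t) - τ * (y - t) ^ 2 / t ^ 2))
    ∧ (s ≤ y → y ≤ t → Real.exp (-(τ * (phiLog t - phiLog y)))
        ≤ Real.exp (-(τ * phiLog' t * (t - y)) - τ * (y - t) ^ 2 / s ^ 2)) :=
  statement18_general t₀ ht₀ τ hτ t y s ht hy
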